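/- arXiv:2510.19211 — 7 statements merged into one kernel-verified Lean document; each statement's English description precedes it below -/
import Mathlib

section
/- For all real numbers x, x', y, y', the following inequality holds: (x − x')·((2x + cos(x)cos(y)) − (2x' + cos(x')cos(y'))) + (y − y')·((2y + cos(y)cos(x)) − (2y' + cos(y')cos(x'))) ≥ 0. In other words, the two-player game on ℝ with costs F₁(x,y) = x² + sin(x)cos(y) and F₂(x,y) = y² + sin(y)cos(x) is displacement monotone, since ∂ₓF₁(x,y) = 2x + cos(x)cos(y) and ∂_yF₂(x,y) = 2y + cos(y)cos(x). -/
lemma cos_lip (a b : ℝ) : |Real.cos a - Real.cos b| ≤ |a - b| := by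
  rw [Real.cos_sub_cos]
  rw [abs_mul, abs_mul, abs_neg]
  have h1 := Real.abs_sin_le_abs (x := (a + b) / 2)
  have h2 := Real.abs_sin_le_abs (x := (a - b) / 2)
  have h3 := Real.abs_sin_le_one ((a + b) / 2)
  have h4 : |Real.sin ((a - b) / 2)| ≤ |a - b| / 2 := by
    calc |Real.sin ((a - b) / 2)| ≤ |(a - b) / 2| := h2
    _ = |a - b| / 2 := by rw [abs_div]; norm_num
  calc |(2 : ℝ)| * |Real.sin ((a + b) / 2)| * |Real.sin ((a - b) / 2)|
      ≤ |(2 : ℝ)| * 1 * (|a - b| / 2) := by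
        apply mul_le_mul
        · exact mul_le_mul_of_nonneg_left h3 (abs_nonneg _)
        · exact h4
        · exact abs_nonneg _
        · positivity
    _ = |a - b| := by rw [abs_two]; ring

/-- Displacement monotonicity of the two-player game with costs
`F₁(x,y) = x² + sin x cos y` and `F₂(x,y) = y² + sin y cos x`:
for all `x, x', y, y'`,
`(x − x')·(∂ₓF₁(x,y) − ∂ₓF₁(x',y')) + (y − y')·(∂_yF₂(x,y) − ∂_yF₂(x',y')) ≥ 0`. -/
theorem stmt2 (x x' y y' : ℝ) :
    0 ≤ (x - x') * ((2 * x + Real.cos x * Real.cos y) - (2 * x' + Real.cos x' * Real.cos y'))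
      + (y - y') * ((2 * y + Real.cos y * Real.cos x) - (2 * y' + Real.cos y' * Real.cos x')) := by
  have hx := cos_lip x x'
  have hy := cos_lip y y'
  have hcx := Real.abs_cos_le_one x
  have hcy' := Real.abs_cos_le_one y'
  have h1 : -|x - x'| ≤ Real.cos x - Real.cos x' := (abs_le.1 hx).1
  have h2 : Real.cos x - Real.cos x' ≤ |x - x'| := (abs_le.1 hx).2
  have h3 : -|y - y'| ≤ Real.cos y - Real.cos y' := (abs_le.1 hy).1
  have h4 : Real.cos y - Real.cos y' ≤ |y - y'| := (abs_le.1 hy).2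
  have hax : |x - x'| ^ 2 = (x - x') ^ 2 := sq_abs _
  have hay : |y - y'| ^ 2 = (y - y') ^ 2 := sq_abs _
  have hax' : -|x - x'| ≤ x - x' := neg_abs_le _
  have hax'' : x - x' ≤ |x - x'| := le_abs_self _
  have hay' : -|y - y'| ≤ y - y' := neg_abs_le _
  have hay'' : y - y' ≤ |y - y'| := le_abs_self _
  have hc1 : -1 ≤ Real.cos x := (abs_le.1 hcx).1
  have hc2 : Real.cos x ≤ 1 := (abs_le.1 hcx).2
  have hc3 : -1 ≤ Real.cos y' := (abs_le.1 hcy').1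
  have hc4 : Real.cos y' ≤ 1 := (abs_le.1 hcy').2
  set M : ℝ := |x - x'| + |y - y'| with hM
  set s : ℝ := x - x' + (y - y') with hs
  set C : ℝ := Real.cos x * (Real.cos y - Real.cos y') + Real.cos y' * (Real.cos x - Real.cos x')
    with hC
  have hsM : s ≤ M := by rw [hs, hM]; linarith
  have hsM' : -M ≤ s := by rw [hs, hM]; linarith
  have hCM : C ≤ M := by
    rw [hC, hM]
    nlinarith
  have hCM' : -M ≤ C := by
    rw [hC, hM]
    nlinarith
  have key1 : 0 ≤ (M - s) * (M - C) := mul_nonneg (by linarith) (by linarith)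
  have key2 : 0 ≤ (M + s) * (M + C) := mul_nonneg (by linarith) (by linarith)
  have hCexp : Real.cos x * Real.cos y - Real.cos x' * Real.cos y' = C := by rw [hC]; ring
  nlinarith [sq_nonneg (|x - x'| - |y - y'|), sq_abs (x - x'), sq_abs (y - y')]
end

section
/- Consider the two-player game on ℝ with costs F₁(x,y) = x² + sin(x)cos(y) and F₂(x,y) = y² + sin(y)cos(x). There exists a unique x* ∈ ℝ satisfying 2x* + cos²(x*) = 0; moreover x* lies in the open interval (−1/2, 0), and (x*, x*) is the unique Nash equilibrium of the game, i.e. the unique pair (x, y) ∈ ℝ² such that F₁(x, y) ≤ F₁(z, y) and F₂(x, y) ≤ F₂(x, z) for all z ∈ ℝ. -/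
/-- Cost of player 1 in the example two-player game. -/
noncomputable def F₁ (x y : ℝ) : ℝ := x ^ 2 + Real.sin x * Real.cos y

/-- Cost of player 2 in the example two-player game. -/
noncomputable def F₂ (x y : ℝ) : ℝ := y ^ 2 + Real.sin y * Real.cos x

lemma hasDerivAt_phi (c t : ℝ) :
    HasDerivAt (fun t : ℝ => 2 * t + c * Real.cos t) (2 - c * Real.sin t) t := by
  have h : HasDerivAt (fun t : ℝ => 2 * t + c * Real.cos t)
      (2 * 1 + c * (-Real.sin t)) t :=
    ((hasDerivAt_id t).const_mul 2).add ((Real.hasDerivAt_cos t).const_mul c)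
  convert h using 1; ring

lemma phi_strictMono {c : ℝ} (hc : |c| ≤ 1) :
    StrictMono (fun t : ℝ => 2 * t + c * Real.cos t) := by
  apply strictMono_of_deriv_pos
  intro t
  rw [(hasDerivAt_phi c t).deriv]
  have h1 : c * Real.sin t ≤ 1 := by
    calc c * Real.sin t ≤ |c * Real.sin t| := le_abs_self _
    _ = |c| * |Real.sin t| := abs_mul _ _
    _ ≤ 1 * 1 := by
        apply mul_le_mul hc (Real.abs_sin_le_one t) (abs_nonneg _) zero_le_one
    _ = 1 := one_mul 1
  linarith

lemma hasDerivAt_f (c z : ℝ) :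
    HasDerivAt (fun z : ℝ => z ^ 2 + c * Real.sin z) (2 * z + c * Real.cos z) z := by
  have h : HasDerivAt (fun z : ℝ => z ^ 2 + c * Real.sin z)
      ((2 : ℕ) * z ^ 1 + c * Real.cos z) z :=
    (hasDerivAt_pow 2 z).add ((Real.hasDerivAt_sin z).const_mul c)
  convert h using 1; push_cast; ring

/-- If `2x + c cos x = 0` with `|c| ≤ 1`, then `x` is a global min of
`z ↦ z² + c sin z`. -/
lemma f_min {c : ℝ} (hc : |c| ≤ 1) {x : ℝ} (hx : 2 * x + c * Real.cos x = 0) :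
    ∀ z : ℝ, x ^ 2 + c * Real.sin x ≤ z ^ 2 + c * Real.sin z := by
  set f : ℝ → ℝ := fun z => z ^ 2 + c * Real.sin z with hf
  have hcont : Continuous f := by
    continuity
  have hmono := phi_strictMono hc
  have hderiv : ∀ t : ℝ, deriv f t = 2 * t + c * Real.cos t := fun t =>
    (hasDerivAt_f c t).deriv
  have hmonoOn : StrictMonoOn f (Set.Ici x) := by
    apply strictMonoOn_of_deriv_pos (convex_Ici x) hcont.continuousOn
    intro t ht
    rw [interior_Ici] at ht
    rw [hderiv]
    have := hmono ht
    simpa [hx] using this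
  have hantiOn : StrictAntiOn f (Set.Iic x) := by
    apply strictAntiOn_of_deriv_neg (convex_Iic x) hcont.continuousOn
    intro t ht
    rw [interior_Iic] at ht
    rw [hderiv]
    have := hmono ht
    simp only [hx] at this
    linarith
  intro z
  rcases lt_trichotomy z x with h | h | h
  · exact (hantiOn (le_of_lt h) (le_refl x) h).le
  · rw [h]
  · exact (hmonoOn (le_refl x) (le_of_lt h) h).le

lemma g_strictMono : StrictMono (fun x : ℝ => 2 * x + Real.cos x ^ 2) := by
  apply strictMono_of_deriv_pos
  intro t
  have h : HasDerivAt (fun x : ℝ => 2 * x + Real.cos x ^ 2)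
      (2 * 1 + (2 : ℕ) * Real.cos t ^ 1 * (-Real.sin t)) t :=
    ((hasDerivAt_id t).const_mul 2).add ((Real.hasDerivAt_cos t).pow 2)
  rw [h.deriv]
  have h1 : Real.sin t * Real.cos t ≤ 1 / 2 := by
    have := Real.sin_le_one (2 * t)
    rw [Real.sin_two_mul] at this
    linarith
  push_cast
  nlinarith

/-- There is a unique `x*` with `2x* + cos²(x*) = 0`; it lies in
`(−1/2, 0)`, and `(x*, x*)` is the unique Nash equilibrium of the game with costs
`F₁(x,y) = x² + sin x cos y`, `F₂(x,y) = y² + sin y cos x`. -/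
theorem stmt3 :
    (∃! xs : ℝ, 2 * xs + Real.cos xs ^ 2 = 0) ∧
    ∀ xs : ℝ, 2 * xs + Real.cos xs ^ 2 = 0 →
      xs ∈ Set.Ioo (-(1 / 2) : ℝ) 0 ∧
      ((∀ z : ℝ, F₁ xs xs ≤ F₁ z xs) ∧ (∀ z : ℝ, F₂ xs xs ≤ F₂ xs z)) ∧
      (∀ x y : ℝ, ((∀ z : ℝ, F₁ x y ≤ F₁ z y) ∧ (∀ z : ℝ, F₂ x y ≤ F₂ x z)) →
        x = xs ∧ y = xs) := by
  set g : ℝ → ℝ := fun x => 2 * x + Real.cos x ^ 2 with hg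
  have hgcont : Continuous g := by continuity
  -- g(-1/2) < 0
  have hgneg : g (-(1 / 2)) < 0 := by
    have hsin : 0 < Real.sin (1 / 2) :=
      Real.sin_pos_of_pos_of_lt_pi (by norm_num) (by linarith [Real.pi_gt_three])
    have hpyth := Real.sin_sq_add_cos_sq (1 / 2 : ℝ)
    simp only [hg, Real.cos_neg]
    nlinarith
  have hgpos : g 0 > 0 := by simp [hg]
  -- existence of a root
  obtain ⟨xs₀, hxs₀mem, hxs₀⟩ : ∃ x ∈ Set.Ioo (-(1 / 2) : ℝ) 0, g x = 0 := by
    have := intermediate_value_Ioo (by norm_num : (-(1 / 2) : ℝ) ≤ 0)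
      hgcont.continuousOn (a := -(1 / 2)) (b := (0 : ℝ))
    have h0 : (0 : ℝ) ∈ Set.Ioo (g (-(1 / 2))) (g 0) := ⟨hgneg, hgpos⟩
    obtain ⟨x, hx, hgx⟩ := this h0
    exact ⟨x, hx, hgx⟩
  refine ⟨⟨xs₀, hxs₀, fun y hy => g_strictMono.injective (show g y = g xs₀ by simp only [hg] at *; rw [hy, hxs₀])⟩, ?_⟩
  intro xs hxs
  have hxs_mem : xs ∈ Set.Ioo (-(1 / 2) : ℝ) 0 := by
    have hxs' : xs = xs₀ := g_strictMono.injective (show g xs = g xs₀ by rw [hxs₀]; exact hxs)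
    rwa [hxs']
  have hcosxs : |Real.cos xs| ≤ 1 := Real.abs_cos_le_one xs
  have hcrit : 2 * xs + Real.cos xs * Real.cos xs = 0 := by
    have : Real.cos xs ^ 2 = Real.cos xs * Real.cos xs := sq (Real.cos xs)
    rw [← this]; exact hxs
  have hmin := f_min hcosxs hcrit
  refine ⟨hxs_mem, ⟨?_, ?_⟩, ?_⟩
  · intro z
    have := hmin z
    simp only [F₁]
    linarith [this]
  · intro z
    have := hmin z
    simp only [F₂]
    linarith [this]
  · rintro x y ⟨h1, h2⟩
    -- first-order conditions
    have hc1 : 2 * x + Real.cos x * Real.cos y = 0 := by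
      have hloc : IsLocalMin (fun z : ℝ => z ^ 2 + Real.cos y * Real.sin z) x := by
        apply IsMinOn.isLocalMin _ (Filter.univ_mem)
        intro z _
        have := h1 z
        simp only [F₁] at this
        simpa [mul_comm] using this
      have := hloc.deriv_eq_zero
      rw [(hasDerivAt_f (Real.cos y) x).deriv] at this
      linarith [this, mul_comm (Real.cos y) (Real.cos x)]
    have hc2 : 2 * y + Real.cos x * Real.cos y = 0 := by
      have hloc : IsLocalMin (fun z : ℝ => z ^ 2 + Real.cos x * Real.sin z) y := by
        apply IsMinOn.isLocalMin _ (Filter.univ_mem)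
        intro z _
        have := h2 z
        simp only [F₂] at this
        simpa [mul_comm] using this
      have := hloc.deriv_eq_zero
      rw [(hasDerivAt_f (Real.cos x) y).deriv] at this
      linarith [this]
    have hxy : x = y := by linarith
    have hgx : g x = 0 := by
      simp only [hg]
      rw [sq]
      rw [hxy] at hc1 ⊢
      linarith [hc1]
    have : x = xs := g_strictMono.injective (show g x = g xs by rw [hgx]; exact hxs.symm)
    exact ⟨this, hxy ▸ this⟩
end

section
/- Let ν be a probability measure on ℝ^d, let σ ∈ (0, 1], and let f, F̲ : ℝ^d → ℝ and F̄ : ℝ^d → ℝ ∪ {+∞} be measurable with F̲(x) ≤ f(x) ≤ F̄(x) for all x. Assume z_* := ∫ e^{−F̄(x)} ν(dx) > 0, and let m be the Gibbs measure of f at temperature σ relative to ν, i.e. Z := ∫ e^{−f(x)/σ} ν(dx) ∈ (0, ∞) and m(A) = Z⁻¹ ∫_A e^{−f(x)/σ} ν(dx) for every Borel set A. Then for every k ∈ ℝ: m({x : F̲(x) > k}) ≤ (e^{−k}/z_*)^{1/σ}. -/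
/-!
On `{F̲ > k}` we have `f > k`, so the unnormalised Gibbs weight of this set is at most
`e^{−k/σ}`. The partition function is bounded below by Jensen's inequality for the map `t ↦ t^{1/σ}`,
convex because `σ ≤ 1`, together with `f ≤ F̄`:
`Z = ∫ (e^{−f})^{1/σ} dν ≥ (∫ e^{−f} dν)^{1/σ} ≥ z_*^{1/σ}`.
-/

open MeasureTheory
open scoped ENNReal

/-- `m` is the Gibbs measure of `f` at temperature `σ` relative to `ν`:
`Z := ∫ e^{−f/σ} dν ∈ (0, ∞)` and `m(A) = Z⁻¹ ∫_A e^{−f/σ} dν` for every Borel `A`. -/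
def IsGibbsMeasure {d : ℕ} (ν : Measure (EuclideanSpace ℝ (Fin d))) (σ : ℝ)
    (f : EuclideanSpace ℝ (Fin d) → ℝ) (m : Measure (EuclideanSpace ℝ (Fin d))) : Prop :=
  Integrable (fun x => Real.exp (-(f x) / σ)) ν ∧
  0 < ∫ x, Real.exp (-(f x) / σ) ∂ν ∧
  ∀ A : Set (EuclideanSpace ℝ (Fin d)), MeasurableSet A →
    m A = ENNReal.ofReal
      ((∫ x in A, Real.exp (-(f x) / σ) ∂ν) / ∫ x, Real.exp (-(f x) / σ) ∂ν)

section ProbabilityMeasure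

variable {α : Type*} [MeasurableSpace α] {μ : Measure α} [IsProbabilityMeasure μ]

theorem rpow_lintegral_le_lintegral_rpow {h : α → ℝ≥0∞} (hh : AEMeasurable h μ) {p : ℝ}
    (hp : 1 ≤ p) : (∫⁻ x, h x ∂μ) ^ p ≤ ∫⁻ x, h x ^ p ∂μ := by
  have hp0 : 0 < p := one_pos.trans_le hp
  have hL1 : ∫⁻ x, h x ∂μ ≤ (∫⁻ x, h x ^ p ∂μ) ^ (1 / p) := by
    simpa [eLpNorm'] using
      eLpNorm'_le_eLpNorm'_of_exponent_le one_pos hp μ hh.aestronglyMeasurable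
  calc (∫⁻ x, h x ∂μ) ^ p ≤ ((∫⁻ x, h x ^ p ∂μ) ^ (1 / p)) ^ p :=
        ENNReal.rpow_le_rpow hL1 hp0.le
    _ = ∫⁻ x, h x ^ p ∂μ := by
        rw [← ENNReal.rpow_mul, one_div_mul_cancel hp0.ne', ENNReal.rpow_one]

theorem setIntegral_exp_neg_div_le {f : α → ℝ} {s : Set α} {σ k : ℝ} (hσ : 0 ≤ σ)
    (hk : ∀ x ∈ s, k ≤ f x) : ∫ x in s, Real.exp (-f x / σ) ∂μ ≤ Real.exp (-k / σ) := by
  have hbound : ∀ x ∈ s, ‖Real.exp (-f x / σ)‖ ≤ Real.exp (-k / σ) := fun x hx => by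
    rw [Real.norm_of_nonneg (Real.exp_pos _).le]
    gcongr
    exact hk x hx
  calc ∫ x in s, Real.exp (-f x / σ) ∂μ ≤ ‖∫ x in s, Real.exp (-f x / σ) ∂μ‖ := Real.le_norm_self _
    _ ≤ Real.exp (-k / σ) * μ.real s :=
        norm_setIntegral_le_of_norm_le_const (measure_lt_top μ s) hbound
    _ ≤ Real.exp (-k / σ) := mul_le_of_le_one_right (Real.exp_pos _).le measureReal_le_one

theorem rpow_lintegral_exp_neg_le_integral_exp_neg_div {f : α → ℝ} {F : α → EReal}
    (hf : AEMeasurable f μ) (hfF : ∀ x, (f x : EReal) ≤ F x) {σ : ℝ} (hσ0 : 0 < σ)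
    (hσ1 : σ ≤ 1) (hint : Integrable (fun x => Real.exp (-f x / σ)) μ) :
    (∫⁻ x, EReal.exp (-F x) ∂μ) ^ (1 / σ)
      ≤ ENNReal.ofReal (∫ x, Real.exp (-f x / σ) ∂μ) := by
  have hexp_le : ∀ x, EReal.exp (-F x) ≤ ENNReal.ofReal (Real.exp (-f x)) := fun x => by
    rw [← EReal.exp_coe, EReal.coe_neg]
    exact EReal.exp_monotone (EReal.neg_le_neg_iff.2 (hfF x))
  have hpow : ∀ x, ENNReal.ofReal (Real.exp (-f x)) ^ (1 / σ)
      = ENNReal.ofReal (Real.exp (-f x / σ)) := fun x => by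
    rw [ENNReal.ofReal_rpow_of_pos (Real.exp_pos _), ← Real.exp_mul, mul_one_div]
  calc (∫⁻ x, EReal.exp (-F x) ∂μ) ^ (1 / σ)
      ≤ (∫⁻ x, ENNReal.ofReal (Real.exp (-f x)) ∂μ) ^ (1 / σ) := by
        gcongr with x
        exact hexp_le x
    _ ≤ ∫⁻ x, ENNReal.ofReal (Real.exp (-f x)) ^ (1 / σ) ∂μ :=
        rpow_lintegral_le_lintegral_rpow (hf.neg.exp.ennreal_ofReal) (one_le_one_div hσ0 hσ1)
    _ = ENNReal.ofReal (∫ x, Real.exp (-f x / σ) ∂μ) := by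
        simp_rw [hpow]
        exact (ofReal_integral_eq_lintegral_ofReal hint
          (ae_of_all _ fun x => (Real.exp_pos _).le)).symm

end ProbabilityMeasure

theorem IsGibbsMeasure.apply_le {d : ℕ} {ν : Measure (EuclideanSpace ℝ (Fin d))} {σ : ℝ}
    {f : EuclideanSpace ℝ (Fin d) → ℝ} {m : Measure (EuclideanSpace ℝ (Fin d))}
    (hm : IsGibbsMeasure ν σ f m) {A : Set (EuclideanSpace ℝ (Fin d))} (hA : MeasurableSet A)
    {c : ℝ} (hc : ∫ x in A, Real.exp (-f x / σ) ∂ν ≤ c) :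
    m A ≤ ENNReal.ofReal c / ENNReal.ofReal (∫ x, Real.exp (-f x / σ) ∂ν) := by
  obtain ⟨-, hZ, hmA⟩ := hm
  rw [hmA A hA, ← ENNReal.ofReal_div_of_pos hZ]
  gcongr

theorem stmt6_general {d : ℕ} (ν : Measure (EuclideanSpace ℝ (Fin d))) [IsProbabilityMeasure ν]
    (σ : ℝ) (hσ0 : 0 < σ) (hσ1 : σ ≤ 1)
    (f Flo : EuclideanSpace ℝ (Fin d) → ℝ) (Fhi : EuclideanSpace ℝ (Fin d) → EReal)
    (hfmeas : Measurable f) (hFlomeas : Measurable Flo)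
    (hsand : ∀ x, Flo x ≤ f x ∧ (f x : EReal) ≤ Fhi x)
    (m : Measure (EuclideanSpace ℝ (Fin d))) (hm : IsGibbsMeasure ν σ f m) (k : ℝ) :
    m {x | k < Flo x}
      ≤ (ENNReal.ofReal (Real.exp (-k)) / ∫⁻ x, EReal.exp (-(Fhi x)) ∂ν) ^ (1 / σ) := by
  have hnum : ∫ x in {x | k < Flo x}, Real.exp (-f x / σ) ∂ν ≤ Real.exp (-k / σ) :=
    setIntegral_exp_neg_div_le hσ0.le fun x hx => (le_of_lt hx).trans (hsand x).1
  have hZ := rpow_lintegral_exp_neg_le_integral_exp_neg_div hfmeas.aemeasurable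
    (fun x => (hsand x).2) hσ0 hσ1 hm.1
  calc m {x | k < Flo x}
      ≤ ENNReal.ofReal (Real.exp (-k / σ)) / ENNReal.ofReal (∫ x, Real.exp (-f x / σ) ∂ν) :=
        hm.apply_le (measurableSet_lt measurable_const hFlomeas) hnum
    _ ≤ ENNReal.ofReal (Real.exp (-k)) ^ (1 / σ) / (∫⁻ x, EReal.exp (-Fhi x) ∂ν) ^ (1 / σ) := by
        rw [ENNReal.ofReal_rpow_of_pos (Real.exp_pos _), ← Real.exp_mul, mul_one_div]
        exact ENNReal.div_le_div_left hZ _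
    _ = (ENNReal.ofReal (Real.exp (-k)) / ∫⁻ x, EReal.exp (-(Fhi x)) ∂ν) ^ (1 / σ) :=
        (ENNReal.div_rpow_of_nonneg _ _ (one_div_pos.2 hσ0).le).symm

/-- Tail bound for the Gibbs measure: if `F̲ ≤ f ≤ F̄`,
`z_* := ∫ e^{−F̄} dν > 0` and `σ ∈ (0,1]`, then
`m{F̲ > k} ≤ (e^{−k}/z_*)^{1/σ}` for every `k`. -/
theorem stmt6 {d : ℕ} (ν : Measure (EuclideanSpace ℝ (Fin d))) [IsProbabilityMeasure ν]
    (σ : ℝ) (hσ0 : 0 < σ) (hσ1 : σ ≤ 1)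
    (f Flo : EuclideanSpace ℝ (Fin d) → ℝ) (Fhi : EuclideanSpace ℝ (Fin d) → EReal)
    (hfmeas : Measurable f) (hFlomeas : Measurable Flo) (hFhimeas : Measurable Fhi)
    (hsand : ∀ x, Flo x ≤ f x ∧ (f x : EReal) ≤ Fhi x)
    (hzs : 0 < ∫⁻ x, EReal.exp (-(Fhi x)) ∂ν)
    (m : Measure (EuclideanSpace ℝ (Fin d))) (hm : IsGibbsMeasure ν σ f m) (k : ℝ) :
    m {x | k < Flo x}
      ≤ (ENNReal.ofReal (Real.exp (-k)) / ∫⁻ x, EReal.exp (-(Fhi x)) ∂ν) ^ (1 / σ) :=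
  stmt6_general ν σ hσ0 hσ1 f Flo Fhi hfmeas hFlomeas hsand m hm k
end

section
/- Let ν be a probability measure on ℝ^d, σ > 0, and let f, g : ℝ^d → ℝ be measurable with sup_{x ∈ ℝ^d} |f(x) − g(x)| ≤ δ for some δ ≥ 0. Let m be the Gibbs measure of f at temperature σ relative to ν, i.e. Z := ∫ e^{−f(x)/σ} ν(dx) ∈ (0, ∞) and m(A) = Z⁻¹ ∫_A e^{−f(x)/σ} ν(dx) for all Borel A. Then for every a ∈ ℝ with ν({x : g(x) < a}) > 0, the quantity D := ∫ 1_{{g(y) < a}} e^{(a − g(y))/σ} ν(dy) is finite and strictly positive, and m({x : g(x) > a}) ≤ e^{2δ/σ} / D. -/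
/-!
Write `Z = ∫ e^{-f/σ} dν` and `N = ∫_{g>a} e^{-f/σ} dν`, so that `m{g > a} = N / Z`.
Since `f ≥ g - δ > a - δ` on `{g > a}` and `ν` is a probability measure, `N ≤ e^{(δ-a)/σ}`.
Since `f ≤ g + δ` everywhere, `e^{(a-g)/σ} ≤ e^{(a+δ)/σ} e^{-f/σ}`, whence `D ≤ e^{(a+δ)/σ} Z`.
Dividing, the factors `e^{∓a/σ}` cancel and leave `m{g > a} ≤ e^{2δ/σ} / D`.
-/

open MeasureTheory

open Real Filter

section PointwiseBounds

variable {a f g δ σ : ℝ}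

lemma exp_sub_div_le_exp_mul_exp_neg_div (hσ : 0 ≤ σ) (hfg : f - g ≤ δ) :
    exp ((a - g) / σ) ≤ exp ((a + δ) / σ) * exp (-f / σ) := by
  rw [← exp_add, ← add_div]
  exact exp_le_exp.2 (div_le_div_of_nonneg_right (by linarith) hσ)

lemma exp_neg_div_le_of_lt (hσ : 0 ≤ σ) (hgf : g - f ≤ δ) (ha : a < g) :
    exp (-f / σ) ≤ exp ((δ - a) / σ) :=
  exp_le_exp.2 (div_le_div_of_nonneg_right (by linarith) hσ)

end PointwiseBounds

lemma setIntegral_exp_pos {α : Type*} [MeasurableSpace α] {ν : Measure α} {s : Set α}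
    {h : α → ℝ} (hs : 0 < ν s) (hint : IntegrableOn (fun x => exp (h x)) s ν) :
    0 < ∫ x in s, exp (h x) ∂ν := by
  have : NeZero (ν.restrict s) := ⟨by simpa [Measure.restrict_eq_zero] using hs.ne'⟩
  exact integral_exp_pos hint

section GibbsBounds

variable {α : Type*} [MeasurableSpace α] {ν : Measure α} {σ δ a : ℝ} {f g : α → ℝ}

lemma integrable_exp_sub_div (hσ : 0 ≤ σ) (hg : Measurable g) (hfg : ∀ x, f x - g x ≤ δ)
    (hf : Integrable (fun x => exp (-f x / σ)) ν) :
    Integrable (fun y => exp ((a - g y) / σ)) ν :=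
  (hf.const_mul (exp ((a + δ) / σ))).mono' (by fun_prop) <| Eventually.of_forall fun y => by
    rw [norm_of_nonneg (exp_pos _).le]
    exact exp_sub_div_le_exp_mul_exp_neg_div hσ (hfg y)

lemma setIntegral_exp_sub_div_le (hσ : 0 ≤ σ) (hg : Measurable g) (hfg : ∀ x, f x - g x ≤ δ)
    (hf : Integrable (fun x => exp (-f x / σ)) ν) :
    ∫ y in {y | g y < a}, exp ((a - g y) / σ) ∂ν
      ≤ exp ((a + δ) / σ) * ∫ x, exp (-f x / σ) ∂ν :=
  calc ∫ y in {y | g y < a}, exp ((a - g y) / σ) ∂ν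
      ≤ ∫ y, exp ((a - g y) / σ) ∂ν :=
        setIntegral_le_integral (integrable_exp_sub_div hσ hg hfg hf)
          (Eventually.of_forall fun _ => (exp_pos _).le)
    _ ≤ ∫ y, exp ((a + δ) / σ) * exp (-f y / σ) ∂ν :=
        integral_mono (integrable_exp_sub_div hσ hg hfg hf) (hf.const_mul _)
          fun y => exp_sub_div_le_exp_mul_exp_neg_div hσ (hfg y)
    _ = exp ((a + δ) / σ) * ∫ x, exp (-f x / σ) ∂ν := integral_const_mul _ _

lemma setIntegral_exp_neg_div_le_s7 [IsProbabilityMeasure ν] (hσ : 0 ≤ σ)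
    (hgf : ∀ x, g x - f x ≤ δ) :
    ∫ x in {x | a < g x}, exp (-f x / σ) ∂ν ≤ exp ((δ - a) / σ) :=
  calc ∫ x in {x | a < g x}, exp (-f x / σ) ∂ν
      ≤ ‖∫ x in {x | a < g x}, exp (-f x / σ) ∂ν‖ := le_norm_self _
    _ ≤ exp ((δ - a) / σ) * ν.real {x | a < g x} :=
        norm_setIntegral_le_of_norm_le_const (measure_lt_top _ _) fun x hx => by
          rw [norm_of_nonneg (exp_pos _).le]
          exact exp_neg_div_le_of_lt hσ (hgf x) hx
    _ ≤ exp ((δ - a) / σ) := mul_le_of_le_one_right (exp_pos _).le measureReal_le_one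

end GibbsBounds

theorem stmt7_general {d : ℕ} (ν : Measure (EuclideanSpace ℝ (Fin d))) [IsProbabilityMeasure ν]
    (σ : ℝ) (hσ : 0 < σ)
    (f g : EuclideanSpace ℝ (Fin d) → ℝ)
    (hgmeas : Measurable g)
    (δ : ℝ) (hfg : ∀ x, |f x - g x| ≤ δ)
    (m : Measure (EuclideanSpace ℝ (Fin d))) (hm : IsGibbsMeasure ν σ f m)
    (a : ℝ) (ha : 0 < ν {x | g x < a}) :
    IntegrableOn (fun y => Real.exp ((a - g y) / σ)) {y | g y < a} ν ∧
    0 < ∫ y in {y | g y < a}, Real.exp ((a - g y) / σ) ∂ν ∧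
    m {x | a < g x}
      ≤ ENNReal.ofReal
          (Real.exp (2 * δ / σ) / ∫ y in {y | g y < a}, Real.exp ((a - g y) / σ) ∂ν) := by
  obtain ⟨hf, -, hmA⟩ := hm
  have hfg' x : f x - g x ≤ δ := (abs_le.1 (hfg x)).2
  have hgf x : g x - f x ≤ δ := by linarith [(abs_le.1 (hfg x)).1]
  have hD_int : IntegrableOn (fun y => exp ((a - g y) / σ)) {y | g y < a} ν :=
    (integrable_exp_sub_div hσ.le hgmeas hfg' hf).integrableOn
  have hD := setIntegral_exp_pos ha hD_int
  refine ⟨hD_int, hD, ?_⟩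
  set D := ∫ y in {y | g y < a}, exp ((a - g y) / σ) ∂ν
  have hDZ : D / exp ((a + δ) / σ) ≤ ∫ x, exp (-f x / σ) ∂ν := by
    rw [div_le_iff₀ (exp_pos _), mul_comm]
    exact setIntegral_exp_sub_div_le hσ.le hgmeas hfg' hf
  rw [hmA _ (measurableSet_lt measurable_const hgmeas)]
  refine ENNReal.ofReal_le_ofReal ?_
  calc _ ≤ exp ((δ - a) / σ) / (D / exp ((a + δ) / σ)) :=
        div_le_div₀ (exp_pos _).le (setIntegral_exp_neg_div_le_s7 hσ.le hgf) (by positivity) hDZ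
    _ = exp (2 * δ / σ) / D := by
        rw [div_div_eq_mul_div, ← exp_add, ← add_div]
        ring_nf

/-- If `sup |f − g| ≤ δ` and `m` is the Gibbs measure of `f` at
temperature `σ`, then for every level `a` with `ν{g < a} > 0`, the quantity
`D := ∫_{g<a} e^{(a−g)/σ} dν` is finite and positive, and `m{g > a} ≤ e^{2δ/σ}/D`. -/
theorem stmt7 {d : ℕ} (ν : Measure (EuclideanSpace ℝ (Fin d))) [IsProbabilityMeasure ν]
    (σ : ℝ) (hσ : 0 < σ)
    (f g : EuclideanSpace ℝ (Fin d) → ℝ)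
    (hfmeas : Measurable f) (hgmeas : Measurable g)
    (δ : ℝ) (hδ : 0 ≤ δ) (hfg : ∀ x, |f x - g x| ≤ δ)
    (m : Measure (EuclideanSpace ℝ (Fin d))) (hm : IsGibbsMeasure ν σ f m)
    (a : ℝ) (ha : 0 < ν {x | g x < a}) :
    IntegrableOn (fun y => Real.exp ((a - g y) / σ)) {y | g y < a} ν ∧
    0 < ∫ y in {y | g y < a}, Real.exp ((a - g y) / σ) ∂ν ∧
    m {x | a < g x}
      ≤ ENNReal.ofReal
          (Real.exp (2 * δ / σ) / ∫ y in {y | g y < a}, Real.exp ((a - g y) / σ) ∂ν) :=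
  stmt7_general ν σ hσ f g hgmeas δ hfg m hm a ha
end

section
/- Let ν be a probability measure on ℝ^d that is mutually absolutely continuous with Lebesgue measure. Let f₀ : ℝ^d → ℝ be continuous and bounded below, let C ≥ 0, let (σ_n) ⊂ (0, 1] with σ_n → 0, and for each n let f_n : ℝ^d → ℝ be measurable with sup_{x ∈ ℝ^d} |f_n(x) − f₀(x)| ≤ C σ_n. Let m_n be the Gibbs measure of f_n at temperature σ_n relative to ν, i.e. Z_n := ∫ e^{−f_n(x)/σ_n} ν(dx) ∈ (0, ∞) and m_n(A) = Z_n⁻¹ ∫_A e^{−f_n(x)/σ_n} ν(dx) for all Borel A. If m_n converges weakly to a probability measure m⁰ (that is, ∫ g dm_n → ∫ g dm⁰ for every bounded continuous g : ℝ^d → ℝ), then m⁰({x : f₀(x) > inf_{y ∈ ℝ^d} f₀(y)}) = 0, i.e. m⁰ is concentrated on the set of global minimizers of f₀. -/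
/-! Since `|f_n - f₀| ≤ C σ_n`, the Gibbs density `e^{-f_n/σ_n}` is at most `e^C e^{-a/σ_n}` where
`f₀ ≥ a` and at least `e^{-C} e^{-b/σ_n}` where `f₀ ≤ b`; comparing the numerator over `{f₀ ≥ a}`
with the part of the normalising constant over `{f₀ ≤ b}` gives
`m_n{f₀ ≥ a} · ν{f₀ ≤ b} ≤ e^{2C} e^{-(a - b)/σ_n} → 0` for `b < a`.
For `c > inf f₀` choose `b` with `inf f₀ < b < c`: the set `{f₀ < b}` is open and nonempty, so it
has positive `ν`-mass because `ν` dominates Lebesgue measure. Hence `m_n{f₀ > c} → 0`, and as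
`{f₀ > c}` is open the portmanteau theorem gives `m⁰{f₀ > c} = 0`; these sets exhaust
`{f₀ > inf f₀}`. -/

open MeasureTheory Filter

open Topology

section Portmanteau

variable {Ω ι : Type*} [MeasurableSpace Ω] [TopologicalSpace Ω] [OpensMeasurableSpace Ω]
  {l : Filter ι} {μs : ι → Measure Ω} [∀ i, IsProbabilityMeasure (μs i)]
  {μ : Measure Ω} [IsProbabilityMeasure μ]

lemma tendsto_probabilityMeasure_of_forall_integral_tendsto
    (h : ∀ g : Ω → ℝ, Continuous g → (∃ K, ∀ x, |g x| ≤ K) →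
      Tendsto (fun i => ∫ x, g x ∂(μs i)) l (𝓝 (∫ x, g x ∂μ))) :
    Tendsto (β := ProbabilityMeasure Ω) (fun i => ⟨μs i, inferInstance⟩) l
      (𝓝 ⟨μ, inferInstance⟩) :=
  ProbabilityMeasure.tendsto_iff_forall_integral_tendsto.2 fun g =>
    h g g.continuous ⟨‖g‖, fun x => g.norm_coe_le_norm x⟩

lemma measure_eq_zero_of_tendsto_measureReal_zero [HasOuterApproxClosed Ω] [l.NeBot]
    (h : ∀ g : Ω → ℝ, Continuous g → (∃ K, ∀ x, |g x| ≤ K) →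
      Tendsto (fun i => ∫ x, g x ∂(μs i)) l (𝓝 (∫ x, g x ∂μ)))
    {G : Set Ω} (hG : IsOpen G) (hμsG : Tendsto (fun i => (μs i).real G) l (𝓝 0)) :
    μ G = 0 := by
  have hlim : Tendsto (fun i => μs i G) l (𝓝 0) := by
    simpa [ofReal_measureReal] using ENNReal.tendsto_ofReal hμsG
  refine nonpos_iff_eq_zero.1 ?_
  calc μ G ≤ l.liminf fun i => μs i G :=
        ProbabilityMeasure.le_liminf_measure_open_of_tendsto
          (tendsto_probabilityMeasure_of_forall_integral_tendsto h) hG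
    _ = 0 := hlim.liminf_eq

end Portmanteau

lemma Real.tendsto_exp_sub_div_of_tendsto_nhdsGT_zero {ι : Type*} {l : Filter ι} {σ : ι → ℝ}
    (hσ : Tendsto σ l (𝓝[>] 0)) (K : ℝ) {δ : ℝ} (hδ : 0 < δ) :
    Tendsto (fun i => Real.exp (K - δ / σ i)) l (𝓝 0) := by
  have hdiv : Tendsto (fun i => δ / σ i) l atTop := by
    simpa only [div_eq_mul_inv, Pi.inv_apply] using hσ.inv_tendsto_nhdsGT_zero.const_mul_atTop hδ
  exact Real.tendsto_exp_atBot.comp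
    (tendsto_atBot_add_const_left l K (tendsto_neg_atTop_atBot.comp hdiv))

namespace IsGibbsMeasure

variable {d : ℕ} {ν : Measure (EuclideanSpace ℝ (Fin d))} {σ : ℝ}
  {f : EuclideanSpace ℝ (Fin d) → ℝ} {m : Measure (EuclideanSpace ℝ (Fin d))}

lemma isProbabilityMeasure (hm : IsGibbsMeasure ν σ f m) : IsProbabilityMeasure m :=
  ⟨by rw [hm.2.2 _ MeasurableSet.univ, Measure.restrict_univ, div_self hm.2.1.ne',
    ENNReal.ofReal_one]⟩

lemma measureReal_mul_le [IsFiniteMeasure ν] (hm : IsGibbsMeasure ν σ f m) (hσ : 0 < σ)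
    {A B : Set (EuclideanSpace ℝ (Fin d))} (hA : MeasurableSet A) (hB : MeasurableSet B)
    {a b : ℝ} (hfA : ∀ x ∈ A, a ≤ f x) (hfB : ∀ x ∈ B, f x ≤ b) :
    m.real A * ν.real B ≤ ν.real A * Real.exp ((b - a) / σ) := by
  obtain ⟨hint, hZ, hmA⟩ := hm
  set Z := ∫ x, Real.exp (-(f x) / σ) ∂ν
  have hexp_le {u v : ℝ} (h : u ≤ v) : Real.exp (-v / σ) ≤ Real.exp (-u / σ) :=
    Real.exp_le_exp.2 (div_le_div_of_nonneg_right (neg_le_neg h) hσ.le)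
  have hnum : ∫ x in A, Real.exp (-(f x) / σ) ∂ν ≤ ν.real A * Real.exp (-a / σ) := by
    calc ∫ x in A, Real.exp (-(f x) / σ) ∂ν ≤ ∫ _ in A, Real.exp (-a / σ) ∂ν :=
          setIntegral_mono_on hint.integrableOn (integrableOn_const (measure_ne_top ν A)) hA
            fun x hx => hexp_le (hfA x hx)
      _ = ν.real A * Real.exp (-a / σ) := by rw [setIntegral_const, smul_eq_mul]
  have hden : ν.real B * Real.exp (-b / σ) ≤ Z := by
    calc ν.real B * Real.exp (-b / σ) = ∫ _ in B, Real.exp (-b / σ) ∂ν := by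
          rw [setIntegral_const, smul_eq_mul]
      _ ≤ ∫ x in B, Real.exp (-(f x) / σ) ∂ν :=
          setIntegral_mono_on (integrableOn_const (measure_ne_top ν B)) hint.integrableOn hB
            fun x hx => hexp_le (hfB x hx)
      _ ≤ Z := setIntegral_le_integral hint (Eventually.of_forall fun _ => (Real.exp_pos _).le)
  have hmA_real : m.real A * Z = ∫ x in A, Real.exp (-(f x) / σ) ∂ν := by
    rw [measureReal_def, hmA A hA, ENNReal.toReal_ofReal
      (div_nonneg (setIntegral_nonneg hA fun _ _ => (Real.exp_pos _).le) hZ.le),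
      div_mul_cancel₀ _ hZ.ne']
  have hkey : m.real A * ν.real B * Real.exp (-b / σ) ≤ ν.real A * Real.exp (-a / σ) :=
    calc m.real A * ν.real B * Real.exp (-b / σ) ≤ m.real A * Z := by
          rw [mul_assoc]; exact mul_le_mul_of_nonneg_left hden measureReal_nonneg
      _ ≤ ν.real A * Real.exp (-a / σ) := hmA_real ▸ hnum
  rw [show (b - a) / σ = -a / σ - -b / σ by ring, Real.exp_sub, mul_div_assoc', le_div_iff₀
    (Real.exp_pos _)]
  exact hkey

end IsGibbsMeasure

lemma tendsto_measureReal_superlevelSet_of_isGibbsMeasure {d : ℕ} {ι : Type*} {l : Filter ι}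
    {ν : Measure (EuclideanSpace ℝ (Fin d))} [IsProbabilityMeasure ν] [ν.IsOpenPosMeasure]
    {f₀ : EuclideanSpace ℝ (Fin d) → ℝ} (hf₀ : Continuous f₀) {C : ℝ} {σ : ι → ℝ}
    (hσ : ∀ i, 0 < σ i) (hσ₀ : Tendsto σ l (𝓝 0)) {f : ι → EuclideanSpace ℝ (Fin d) → ℝ}
    (hf : ∀ i x, |f i x - f₀ x| ≤ C * σ i) {m : ι → Measure (EuclideanSpace ℝ (Fin d))}
    (hm : ∀ i, IsGibbsMeasure ν (σ i) (f i) (m i)) {c : ℝ} (hc : ∃ x, f₀ x < c) :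
    Tendsto (fun i => (m i).real {x | c < f₀ x}) l (𝓝 0) := by
  obtain ⟨x₀, hx₀⟩ := hc
  set b := (f₀ x₀ + c) / 2
  set B := {x | f₀ x < b}
  set G := {x | c < f₀ x}
  have hB_open : IsOpen B := isOpen_lt hf₀ continuous_const
  have hνB : 0 < ν.real B :=
    ENNReal.toReal_pos (hB_open.measure_ne_zero ν ⟨x₀, show f₀ x₀ < b by grind⟩)
      (measure_ne_top ν B)
  have hbound (i : ι) : (m i).real G ≤ Real.exp (2 * C - (c - b) / σ i) / ν.real B := by
    have hexponent : (b + C * σ i - (c - C * σ i)) / σ i = 2 * C - (c - b) / σ i := by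
      field_simp [(hσ i).ne']; ring
    rw [le_div_iff₀ hνB]
    calc (m i).real G * ν.real B
        ≤ ν.real G * Real.exp ((b + C * σ i - (c - C * σ i)) / σ i) :=
          (hm i).measureReal_mul_le (hσ i) (isOpen_lt continuous_const hf₀).measurableSet
            hB_open.measurableSet
            (fun x (hx : c < f₀ x) => by linarith [(abs_le.1 (hf i x)).1])
            (fun x (hx : f₀ x < b) => by linarith [(abs_le.1 (hf i x)).2])
      _ ≤ Real.exp (2 * C - (c - b) / σ i) := by
          rw [hexponent]
          exact mul_le_of_le_one_left (Real.exp_pos _).le measureReal_le_one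
  have hσ₀' : Tendsto σ l (𝓝[>] 0) :=
    tendsto_nhdsWithin_iff.2 ⟨hσ₀, Eventually.of_forall hσ⟩
  have hlim := (Real.tendsto_exp_sub_div_of_tendsto_nhdsGT_zero hσ₀' (2 * C)
    (show 0 < c - b by grind)).div_const (ν.real B)
  rw [zero_div] at hlim
  exact tendsto_of_tendsto_of_tendsto_of_le_of_le tendsto_const_nhds hlim
    (fun _ => measureReal_nonneg) hbound

theorem stmt8_general {d : ℕ} (ν : Measure (EuclideanSpace ℝ (Fin d))) [IsProbabilityMeasure ν]
    (hν₂ : MeasureTheory.volume ≪ ν)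
    (f₀ : EuclideanSpace ℝ (Fin d) → ℝ) (hf₀cont : Continuous f₀)
    (C : ℝ)
    (σ : ℕ → ℝ) (hσ : ∀ n, σ n ∈ Set.Ioc (0 : ℝ) 1) (hσ₀ : Tendsto σ atTop (nhds 0))
    (f : ℕ → EuclideanSpace ℝ (Fin d) → ℝ)
    (hfclose : ∀ n x, |f n x - f₀ x| ≤ C * σ n)
    (m : ℕ → Measure (EuclideanSpace ℝ (Fin d)))
    (hGibbs : ∀ n, IsGibbsMeasure ν (σ n) (f n) (m n))
    (m₀ : Measure (EuclideanSpace ℝ (Fin d))) [IsProbabilityMeasure m₀]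
    (hweak : ∀ g : EuclideanSpace ℝ (Fin d) → ℝ, Continuous g → (∃ K, ∀ x, |g x| ≤ K) →
      Tendsto (fun n => ∫ x, g x ∂(m n)) atTop (nhds (∫ x, g x ∂m₀))) :
    m₀ {x | (⨅ y, f₀ y) < f₀ x} = 0 := by
  have := hν₂.isOpenPosMeasure
  have := fun n => (hGibbs n).isProbabilityMeasure
  obtain ⟨u, -, hu_gt, hu⟩ := exists_seq_strictAnti_tendsto (⨅ y, f₀ y)
  have hsub : {x | (⨅ y, f₀ y) < f₀ x} ⊆ ⋃ k, {x | u k < f₀ x} := fun x hx =>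
    Set.mem_iUnion.2 (hu.eventually (gt_mem_nhds hx)).exists
  refine measure_mono_null hsub (measure_iUnion_null fun k => ?_)
  exact measure_eq_zero_of_tendsto_measureReal_zero hweak (isOpen_lt continuous_const hf₀cont)
    (tendsto_measureReal_superlevelSet_of_isGibbsMeasure hf₀cont (fun n => (hσ n).1) hσ₀ hfclose
      hGibbs (exists_lt_of_ciInf_lt (hu_gt k)))

/-- Vanishing-temperature (Laplace principle) limit of Gibbs measures:
if `ν` is mutually absolutely continuous with Lebesgue measure, `f₀` is continuous and
bounded below, `sup |f_n − f₀| ≤ C σ_n` with `σ_n ∈ (0,1]`, `σ_n → 0`, `m_n` is the Gibbs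
measure of `f_n` at temperature `σ_n`, and `m_n → m⁰` weakly, then `m⁰` is concentrated
on the global minimizers of `f₀`. -/
theorem stmt8 {d : ℕ} (ν : Measure (EuclideanSpace ℝ (Fin d))) [IsProbabilityMeasure ν]
    (hν₁ : ν ≪ MeasureTheory.volume) (hν₂ : MeasureTheory.volume ≪ ν)
    (f₀ : EuclideanSpace ℝ (Fin d) → ℝ) (hf₀cont : Continuous f₀)
    (hf₀bdd : BddBelow (Set.range f₀))
    (C : ℝ) (hC : 0 ≤ C)
    (σ : ℕ → ℝ) (hσ : ∀ n, σ n ∈ Set.Ioc (0 : ℝ) 1) (hσ₀ : Tendsto σ atTop (nhds 0))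
    (f : ℕ → EuclideanSpace ℝ (Fin d) → ℝ) (hfmeas : ∀ n, Measurable (f n))
    (hfclose : ∀ n x, |f n x - f₀ x| ≤ C * σ n)
    (m : ℕ → Measure (EuclideanSpace ℝ (Fin d)))
    (hGibbs : ∀ n, IsGibbsMeasure ν (σ n) (f n) (m n))
    (m₀ : Measure (EuclideanSpace ℝ (Fin d))) [IsProbabilityMeasure m₀]
    (hweak : ∀ g : EuclideanSpace ℝ (Fin d) → ℝ, Continuous g → (∃ K, ∀ x, |g x| ≤ K) →
      Tendsto (fun n => ∫ x, g x ∂(m n)) atTop (nhds (∫ x, g x ∂m₀))) :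
    m₀ {x | (⨅ y, f₀ y) < f₀ x} = 0 :=
  stmt8_general ν hν₂ f₀ hf₀cont C σ hσ hσ₀ f hfclose m hGibbs m₀ hweak
end

section
/- Let ν be a probability measure on ℝ^d, σ > 0, and F : ℝ^d × P(ℝ^d) → ℝ. For probability measures μ, m on ℝ^d define the free energy Φ(μ, m) := ∫ F(x, m) μ(dx) + σ·H(μ|ν), where H(μ|ν) ∈ [0, ∞] is the Kullback–Leibler divergence (relative entropy) of μ with respect to ν. Let m, m' be probability measures on ℝ^d with H(m|ν) < ∞ and H(m'|ν) < ∞, such that F(·, m) and F(·, m') are integrable with respect to both m and m', and such that m minimizes μ ↦ Φ(μ, m) and m' minimizes μ ↦ Φ(μ, m') over all probability measures on ℝ^d. Then ∫ (F(x, m) − F(x, m')) m(dx) − ∫ (F(x, m) − F(x, m')) m'(dx) ≤ 0. In particular, if F is strictly Lasry–Lions monotone, then m = m'. -/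
open MeasureTheory
open scoped Classical

/-- The Kullback–Leibler divergence (relative entropy) `H(μ|ν) ∈ ℝ ∪ {+∞}`:
`∫ log(dμ/dν) dμ` if `μ ≪ ν` and the integral is defined, `+∞` otherwise. -/
noncomputable def relEntropy {d : ℕ}
    (μ ν : Measure (EuclideanSpace ℝ (Fin d))) : EReal :=
  if μ ≪ ν ∧ Integrable (fun x => Real.log ((μ.rnDeriv ν x).toReal)) μ
  then ((∫ x, Real.log ((μ.rnDeriv ν x).toReal) ∂μ : ℝ) : EReal)
  else ⊤

/-- The free energy `Φ(μ, m) := ∫ F(x, m) μ(dx) + σ·H(μ|ν)`. -/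
noncomputable def freeEnergy {d : ℕ} (σ : ℝ)
    (ν : Measure (EuclideanSpace ℝ (Fin d)))
    (F : EuclideanSpace ℝ (Fin d) → Measure (EuclideanSpace ℝ (Fin d)) → ℝ)
    (μ m : Measure (EuclideanSpace ℝ (Fin d))) : EReal :=
  ((∫ x, F x m ∂μ : ℝ) : EReal) + (σ : EReal) * relEntropy μ ν

section FreeEnergy

variable {d : ℕ} {ν : Measure (EuclideanSpace ℝ (Fin d))} {σ : ℝ}
  {F : EuclideanSpace ℝ (Fin d) → Measure (EuclideanSpace ℝ (Fin d)) → ℝ}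

theorem relEntropy_ne_bot (μ ν : Measure (EuclideanSpace ℝ (Fin d))) :
    relEntropy μ ν ≠ ⊥ := by
  unfold relEntropy
  split_ifs <;> simp

theorem coe_toReal_relEntropy {μ : Measure (EuclideanSpace ℝ (Fin d))}
    (hμ : relEntropy μ ν ≠ ⊤) : ((relEntropy μ ν).toReal : EReal) = relEntropy μ ν :=
  EReal.coe_toReal hμ (relEntropy_ne_bot μ ν)

theorem freeEnergy_eq_coe {μ : Measure (EuclideanSpace ℝ (Fin d))}
    (hμ : relEntropy μ ν ≠ ⊤) (m : Measure (EuclideanSpace ℝ (Fin d))) :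
    freeEnergy σ ν F μ m = ((∫ x, F x m ∂μ + σ * (relEntropy μ ν).toReal : ℝ) : EReal) := by
  rw [freeEnergy, EReal.coe_add, EReal.coe_mul, coe_toReal_relEntropy hμ]

/-- Adding the two minimality inequalities `Φ(m, m) ≤ Φ(m', m)` and `Φ(m', m') ≤ Φ(m, m')`
cancels the (finite) entropy terms, leaving exactly the Lasry–Lions quantity. -/
theorem lasryLions_nonpos_of_freeEnergy_le {m m' : Measure (EuclideanSpace ℝ (Fin d))}
    (hHm : relEntropy m ν ≠ ⊤) (hHm' : relEntropy m' ν ≠ ⊤)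
    (h₁ : Integrable (fun x => F x m) m) (h₂ : Integrable (fun x => F x m) m')
    (h₃ : Integrable (fun x => F x m') m) (h₄ : Integrable (fun x => F x m') m')
    (hle : freeEnergy σ ν F m m ≤ freeEnergy σ ν F m' m)
    (hle' : freeEnergy σ ν F m' m' ≤ freeEnergy σ ν F m m') :
    (∫ x, (F x m - F x m') ∂m) - (∫ x, (F x m - F x m') ∂m') ≤ 0 := by
  rw [freeEnergy_eq_coe hHm, freeEnergy_eq_coe hHm', EReal.coe_le_coe_iff] at hle hle'
  rw [integral_sub h₁ h₃, integral_sub h₂ h₄]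
  linarith

end FreeEnergy

theorem stmt9_general {d : ℕ} (ν : Measure (EuclideanSpace ℝ (Fin d)))
    (σ : ℝ)
    (F : EuclideanSpace ℝ (Fin d) → Measure (EuclideanSpace ℝ (Fin d)) → ℝ)
    (m m' : Measure (EuclideanSpace ℝ (Fin d)))
    [IsProbabilityMeasure m] [IsProbabilityMeasure m']
    (hHm : relEntropy m ν ≠ ⊤) (hHm' : relEntropy m' ν ≠ ⊤)
    (h₁ : Integrable (fun x => F x m) m) (h₂ : Integrable (fun x => F x m) m')
    (h₃ : Integrable (fun x => F x m') m) (h₄ : Integrable (fun x => F x m') m')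
    (hmin : ∀ μ : Measure (EuclideanSpace ℝ (Fin d)), IsProbabilityMeasure μ →
      Integrable (fun x => F x m) μ → freeEnergy σ ν F m m ≤ freeEnergy σ ν F μ m)
    (hmin' : ∀ μ : Measure (EuclideanSpace ℝ (Fin d)), IsProbabilityMeasure μ →
      Integrable (fun x => F x m') μ → freeEnergy σ ν F m' m' ≤ freeEnergy σ ν F μ m') :
    ((∫ x, (F x m - F x m') ∂m) - (∫ x, (F x m - F x m') ∂m') ≤ 0) ∧
    ((∀ μ₁ μ₂ : Measure (EuclideanSpace ℝ (Fin d)),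
        IsProbabilityMeasure μ₁ → IsProbabilityMeasure μ₂ → μ₁ ≠ μ₂ →
        Integrable (fun x => F x μ₁) μ₁ → Integrable (fun x => F x μ₁) μ₂ →
        Integrable (fun x => F x μ₂) μ₁ → Integrable (fun x => F x μ₂) μ₂ →
        0 < (∫ x, (F x μ₁ - F x μ₂) ∂μ₁) - (∫ x, (F x μ₁ - F x μ₂) ∂μ₂)) → m = m') := by
  have hnonpos := lasryLions_nonpos_of_freeEnergy_le hHm hHm' h₁ h₂ h₃ h₄
    (hmin m' inferInstance h₂) (hmin' m inferInstance h₃)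
  refine ⟨hnonpos, fun hstrict => ?_⟩
  by_contra hne
  exact (hstrict m m' inferInstance inferInstance hne h₁ h₂ h₃ h₄).not_ge hnonpos

/-- If `m` minimizes `μ ↦ Φ(μ, m)` and `m'` minimizes `μ ↦ Φ(μ, m')`,
then the Lasry–Lions quantity `∫ (F(·,m) − F(·,m')) d(m − m')` is `≤ 0`; in particular,
if `F` is strictly Lasry–Lions monotone then `m = m'`. -/
theorem stmt9 {d : ℕ} (ν : Measure (EuclideanSpace ℝ (Fin d))) [IsProbabilityMeasure ν]
    (σ : ℝ) (hσ : 0 < σ)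
    (F : EuclideanSpace ℝ (Fin d) → Measure (EuclideanSpace ℝ (Fin d)) → ℝ)
    (m m' : Measure (EuclideanSpace ℝ (Fin d)))
    [IsProbabilityMeasure m] [IsProbabilityMeasure m']
    (hHm : relEntropy m ν ≠ ⊤) (hHm' : relEntropy m' ν ≠ ⊤)
    (h₁ : Integrable (fun x => F x m) m) (h₂ : Integrable (fun x => F x m) m')
    (h₃ : Integrable (fun x => F x m') m) (h₄ : Integrable (fun x => F x m') m')
    (hmin : ∀ μ : Measure (EuclideanSpace ℝ (Fin d)), IsProbabilityMeasure μ →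
      Integrable (fun x => F x m) μ → freeEnergy σ ν F m m ≤ freeEnergy σ ν F μ m)
    (hmin' : ∀ μ : Measure (EuclideanSpace ℝ (Fin d)), IsProbabilityMeasure μ →
      Integrable (fun x => F x m') μ → freeEnergy σ ν F m' m' ≤ freeEnergy σ ν F μ m') :
    ((∫ x, (F x m - F x m') ∂m) - (∫ x, (F x m - F x m') ∂m') ≤ 0) ∧
    ((∀ μ₁ μ₂ : Measure (EuclideanSpace ℝ (Fin d)),
        IsProbabilityMeasure μ₁ → IsProbabilityMeasure μ₂ → μ₁ ≠ μ₂ →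
        Integrable (fun x => F x μ₁) μ₁ → Integrable (fun x => F x μ₁) μ₂ →
        Integrable (fun x => F x μ₂) μ₁ → Integrable (fun x => F x μ₂) μ₂ →
        0 < (∫ x, (F x μ₁ - F x μ₂) ∂μ₁) - (∫ x, (F x μ₁ - F x μ₂) ∂μ₂)) → m = m') :=
  stmt9_general ν σ F m m' hHm hHm' h₁ h₂ h₃ h₄ hmin hmin'
end

section
/- Let F : ℝ^d × P(ℝ^d) → ℝ be such that for each probability measure m the map x ↦ F(x, m) is differentiable with gradient ∇_x F(·, m). Assume F is strictly displacement monotone: for all probability measures m ≠ m' on ℝ^d with finite second moment and every coupling π of (m, m'), ∫ (x − x')·(∇_x F(x, m) − ∇_x F(x', m')) π(dx, dx') > 0. If m and m' are both mean field equilibria with finite second moment, then m = m'. -/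
/-!
Equilibria have their support inside the set of global minimisers of `F(·, m)`, where the
gradient vanishes. So for equilibria `m ≠ m'` the displacement-monotonicity integrand vanishes
on `supp m × supp m'`, which carries the product coupling; its integral is then `0`, not `> 0`.
-/

open MeasureTheory

/-- The (topological) support of a measure: points all of whose open neighbourhoods
have positive measure. -/
def msupport {d : ℕ} (m : Measure (EuclideanSpace ℝ (Fin d))) :
    Set (EuclideanSpace ℝ (Fin d)) :=
  {x | ∀ U : Set (EuclideanSpace ℝ (Fin d)), IsOpen U → x ∈ U → 0 < m U}

lemma msupport_eq_support {d : ℕ} (m : Measure (EuclideanSpace ℝ (Fin d))) :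
    msupport m = m.support := by
  rw [Measure.support_eq_forall_isOpen]
  ext x
  exact forall_congr' fun U => forall_comm

lemma ae_mem_msupport {d : ℕ} (m : Measure (EuclideanSpace ℝ (Fin d))) :
    ∀ᵐ x ∂m, x ∈ msupport m :=
  msupport_eq_support m ▸ Measure.support_mem_ae

theorem IsLocalMin.hasGradientAt_eq_zero {E : Type*} [NormedAddCommGroup E]
    [InnerProductSpace ℝ E] [CompleteSpace E] {f : E → ℝ} {f' x : E}
    (h : IsLocalMin f x) (hf : HasGradientAt f f' x) : f' = 0 :=
  (InnerProductSpace.toDual ℝ E).injective <| by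
    simpa using h.hasFDerivAt_eq_zero hf.hasFDerivAt

lemma ae_mem_prod_of_map_fst_of_map_snd {α β : Type*} [MeasurableSpace α]
    [MeasurableSpace β] {μ : Measure α} {ν : Measure β} {π : Measure (α × β)}
    (hfst : π.map Prod.fst = μ) (hsnd : π.map Prod.snd = ν) {s : Set α} {t : Set β}
    (hs : ∀ᵐ x ∂μ, x ∈ s) (ht : ∀ᵐ y ∂ν, y ∈ t) : ∀ᵐ p ∂π, p ∈ s ×ˢ t := by
  subst hfst hsnd
  filter_upwards [ae_of_ae_map measurable_fst.aemeasurable hs,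
    ae_of_ae_map measurable_snd.aemeasurable ht] with p hp₁ hp₂
  exact ⟨hp₁, hp₂⟩

/-- Strict displacement monotonicity of `F` implies uniqueness of the
mean field equilibrium (among equilibria with finite second moment). -/
theorem stmt10 {d : ℕ}
    (F : EuclideanSpace ℝ (Fin d) → Measure (EuclideanSpace ℝ (Fin d)) → ℝ)
    (G : EuclideanSpace ℝ (Fin d) → Measure (EuclideanSpace ℝ (Fin d)) →
      EuclideanSpace ℝ (Fin d))
    (hgrad : ∀ (μ : Measure (EuclideanSpace ℝ (Fin d))) (x : EuclideanSpace ℝ (Fin d)),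
      HasGradientAt (fun z => F z μ) (G x μ) x)
    (hmono : ∀ μ μ' : Measure (EuclideanSpace ℝ (Fin d)),
      IsProbabilityMeasure μ → IsProbabilityMeasure μ' →
      Integrable (fun x => ‖x‖ ^ 2) μ → Integrable (fun x => ‖x‖ ^ 2) μ' → μ ≠ μ' →
      ∀ π : Measure (EuclideanSpace ℝ (Fin d) × EuclideanSpace ℝ (Fin d)),
        IsProbabilityMeasure π → π.map Prod.fst = μ → π.map Prod.snd = μ' →
        (0 : ℝ) < ∫ p, (inner ℝ (p.1 - p.2) (G p.1 μ - G p.2 μ') : ℝ) ∂π)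
    (m m' : Measure (EuclideanSpace ℝ (Fin d)))
    [IsProbabilityMeasure m] [IsProbabilityMeasure m']
    (hm2 : Integrable (fun x => ‖x‖ ^ 2) m) (hm'2 : Integrable (fun x => ‖x‖ ^ 2) m')
    (hMFE : msupport m = {x | ∀ y, F x m ≤ F y m})
    (hMFE' : msupport m' = {x | ∀ y, F x m' ≤ F y m'}) :
    m = m' := by
  by_contra hne
  have hG : ∀ μ, msupport μ = {x | ∀ y, F x μ ≤ F y μ} → ∀ x ∈ msupport μ, G x μ = 0 :=
    fun μ hμ x hx => IsLocalMin.hasGradientAt_eq_zero (f := fun z => F z μ)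
      (Filter.Eventually.of_forall (hμ.subset hx)) (hgrad μ x)
  have hfst : (m.prod m').map Prod.fst = m := by simp
  have hsnd : (m.prod m').map Prod.snd = m' := by simp
  have hzero : ∫ p, (inner ℝ (p.1 - p.2) (G p.1 m - G p.2 m') : ℝ) ∂(m.prod m') = 0 := by
    refine integral_eq_zero_of_ae ?_
    filter_upwards [ae_mem_prod_of_map_fst_of_map_snd hfst hsnd (ae_mem_msupport m)
      (ae_mem_msupport m')] with p hp
    simp [hG m hMFE _ hp.1, hG m' hMFE' _ hp.2]
  exact (hmono m m' ‹_› ‹_› hm2 hm'2 hne _ inferInstance hfst hsnd).ne' hzero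
end
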